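/- Let U ⊆ ℝ² be open, z : ℝ² → ℝ twice continuously differentiable on U, and (x₀,y₀) ∈ U. Set D(x,y,p) = z_y(x,y) + z_x(x,y)·p − p², F = 1/D, G = (p − z_x)/D, and let E = ∂F/∂y + G·∂F/∂p − ∂G/∂x − F·∂G/∂p be the compatibility expression (partial derivatives in the independent variables (x,y,p)). Then the following are equivalent: (i) z satisfies the Gibbons–Tsarev equation z_yy + z_x·z_xy − z_y·z_xx + 1 = 0 at (x₀,y₀); (ii) E(x₀,y₀,p) = 0 for every p with D(x₀,y₀,p) ≠ 0; (iii) E(x₀,y₀,p) = 0 for some p with D(x₀,y₀,p) ≠ 0. -/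

import Mathlib

/-! Differentiating `F = 1/D` and `G = (p - z_x)/D` and using `z_xy = z_yx`, every term that
depends on `p` cancels and `E = -(z_yy + z_x z_xy - z_y z_xx + 1)/D²` wherever `D ≠ 0`. Since
`D(x, y, ·)` is a monic quadratic up to sign, it does not vanish identically. -/

/-- Partial derivative in `x` of a function on `ℝ × ℝ`. -/
noncomputable def pdx (f : ℝ × ℝ → ℝ) (q : ℝ × ℝ) : ℝ := fderiv ℝ f q (1, 0)

/-- Partial derivative in `y` of a function on `ℝ × ℝ`. -/
noncomputable def pdy (f : ℝ × ℝ → ℝ) (q : ℝ × ℝ) : ℝ := fderiv ℝ f q (0, 1)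

/-- Partial derivative in the first variable `x` of a function on `ℝ × ℝ × ℝ = {(x,y,p)}`. -/
noncomputable def pd1 (f : ℝ × ℝ × ℝ → ℝ) (q : ℝ × ℝ × ℝ) : ℝ := fderiv ℝ f q (1, 0, 0)

/-- Partial derivative in the second variable `y`. -/
noncomputable def pd2 (f : ℝ × ℝ × ℝ → ℝ) (q : ℝ × ℝ × ℝ) : ℝ := fderiv ℝ f q (0, 1, 0)

/-- Partial derivative in the third variable `p`. -/
noncomputable def pd3 (f : ℝ × ℝ × ℝ → ℝ) (q : ℝ × ℝ × ℝ) : ℝ := fderiv ℝ f q (0, 0, 1)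

/-- `D(x,y,p) = z_y(x,y) + z_x(x,y)·p − p²`. -/
noncomputable def Dfun (z : ℝ × ℝ → ℝ) (q : ℝ × ℝ × ℝ) : ℝ :=
  pdy z (q.1, q.2.1) + pdx z (q.1, q.2.1) * q.2.2 - q.2.2 ^ 2

/-- `F(x,y,p) = 1/D(x,y,p)`. -/
noncomputable def Ffun (z : ℝ × ℝ → ℝ) (q : ℝ × ℝ × ℝ) : ℝ := 1 / Dfun z q

/-- `G(x,y,p) = (p − z_x(x,y))/D(x,y,p)`. -/
noncomputable def Gfun (z : ℝ × ℝ → ℝ) (q : ℝ × ℝ × ℝ) : ℝ :=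
  (q.2.2 - pdx z (q.1, q.2.1)) / Dfun z q

/-- The Gibbons–Tsarev expression `z_yy + z_x·z_xy − z_y·z_xx + 1`. -/
noncomputable def GT (z : ℝ × ℝ → ℝ) (q : ℝ × ℝ) : ℝ :=
  pdy (pdy z) q + pdx z q * pdx (pdy z) q - pdy z q * pdx (pdx z) q + 1

/-- The compatibility (zero-curvature) expression
`E = ∂F/∂y + G·∂F/∂p − ∂G/∂x − F·∂G/∂p` of system (1). -/
noncomputable def Efun (z : ℝ × ℝ → ℝ) (q : ℝ × ℝ × ℝ) : ℝ :=
  pd2 (Ffun z) q + Gfun z q * pd3 (Ffun z) q - pd1 (Gfun z) q - Ffun z q * pd3 (Gfun z) q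

section Quotient

variable {E : Type*} [NormedAddCommGroup E] [NormedSpace ℝ E] {c d : E → ℝ} {q : E}

theorem fderiv_div_apply (hc : DifferentiableAt ℝ c q) (hd : DifferentiableAt ℝ d q)
    (hq : d q ≠ 0) (v : E) :
    fderiv ℝ (fun x => c x / d x) q v =
      (fderiv ℝ c q v * d q - c q * fderiv ℝ d q v) / d q ^ 2 := by
  have h := hc.hasFDerivAt.fun_mul ((hasDerivAt_inv hq).comp_hasFDerivAt q hd.hasFDerivAt)
  simp only [Function.comp_def, ← div_eq_mul_inv] at h
  rw [h.fderiv]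
  simp only [add_apply, smul_apply, smul_eq_mul]
  field_simp
  ring

end Quotient

theorem fderiv_apply_eq_pdx_pdy (f : ℝ × ℝ → ℝ) (w v : ℝ × ℝ) :
    fderiv ℝ f w v = v.1 * pdx f w + v.2 * pdy f w := by
  have hv : v = v.1 • ((1 : ℝ), (0 : ℝ)) + v.2 • ((0 : ℝ), (1 : ℝ)) := by ext <;> simp
  conv_lhs => rw [hv, map_add, map_smul, map_smul]
  rfl

theorem ContDiffAt.differentiableAt_fderiv_apply {f : ℝ × ℝ → ℝ} {w : ℝ × ℝ}
    (hf : ContDiffAt ℝ 2 f w) (v : ℝ × ℝ) :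
    DifferentiableAt ℝ (fun w => fderiv ℝ f w v) w :=
  ((hf.fderiv_right le_rfl).differentiableAt one_ne_zero).clm_apply
    (differentiableAt_const v)

theorem pdy_pdx_eq_pdx_pdy {f : ℝ × ℝ → ℝ} {w : ℝ × ℝ} (hf : ContDiffAt ℝ 2 f w) :
    pdy (pdx f) w = pdx (pdy f) w := by
  have hf' := (hf.fderiv_right le_rfl).differentiableAt one_ne_zero
  change fderiv ℝ (fun w => fderiv ℝ f w (1, 0)) w (0, 1) =
    fderiv ℝ (fun w => fderiv ℝ f w (0, 1)) w (1, 0)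
  rw [fderiv_clm_apply hf' (differentiableAt_const _),
    fderiv_clm_apply hf' (differentiableAt_const _)]
  simpa using (hf.isSymmSndFDerivAt (by simp)) (0, 1) (1, 0)

section Lift

variable {f : ℝ × ℝ → ℝ} {x y p : ℝ}

theorem DifferentiableAt.comp_xy (hf : DifferentiableAt ℝ f (x, y)) :
    DifferentiableAt ℝ (fun q : ℝ × ℝ × ℝ => f (q.1, q.2.1)) (x, y, p) :=
  hf.comp (x, y, p) (by fun_prop)

theorem fderiv_comp_xy_apply (hf : DifferentiableAt ℝ f (x, y)) (v : ℝ × ℝ × ℝ) :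
    fderiv ℝ (fun q : ℝ × ℝ × ℝ => f (q.1, q.2.1)) (x, y, p) v =
      v.1 * pdx f (x, y) + v.2.1 * pdy f (x, y) := by
  have hπ : HasFDerivAt (fun q : ℝ × ℝ × ℝ => (q.1, q.2.1))
      ((ContinuousLinearMap.fst ℝ ℝ (ℝ × ℝ)).prod
        ((ContinuousLinearMap.fst ℝ ℝ ℝ).comp (ContinuousLinearMap.snd ℝ ℝ (ℝ × ℝ)))) (x, y, p) :=
    hasFDerivAt_fst.prodMk hasFDerivAt_snd.fst
  have h : HasFDerivAt (fun q : ℝ × ℝ × ℝ => f (q.1, q.2.1)) _ (x, y, p) :=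
    hf.hasFDerivAt.comp (x, y, p) hπ
  rw [h.fderiv]
  exact fderiv_apply_eq_pdx_pdy f _ (v.1, v.2.1)

theorem fderiv_third_apply (q v : ℝ × ℝ × ℝ) :
    fderiv ℝ (fun q : ℝ × ℝ × ℝ => q.2.2) q v = v.2.2 := by
  rw [fderiv.snd differentiableAt_snd, fderiv_snd]
  rfl

end Lift

section Compatibility

variable {z : ℝ × ℝ → ℝ} {x y p : ℝ}

theorem differentiableAt_Dfun (ha : DifferentiableAt ℝ (pdx z) (x, y))
    (hb : DifferentiableAt ℝ (pdy z) (x, y)) : DifferentiableAt ℝ (Dfun z) (x, y, p) := by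
  have := ha.comp_xy (p := p)
  have := hb.comp_xy (p := p)
  unfold Dfun
  fun_prop

theorem fderiv_Dfun_apply (ha : DifferentiableAt ℝ (pdx z) (x, y))
    (hb : DifferentiableAt ℝ (pdy z) (x, y)) (v : ℝ × ℝ × ℝ) :
    fderiv ℝ (Dfun z) (x, y, p) v =
      v.1 * (pdx (pdy z) (x, y) + p * pdx (pdx z) (x, y)) +
      v.2.1 * (pdy (pdy z) (x, y) + p * pdy (pdx z) (x, y)) + v.2.2 * (pdx z (x, y) - 2 * p) := by
  have ha' := ha.comp_xy (p := p)
  have hb' := hb.comp_xy (p := p)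
  unfold Dfun
  rw [fderiv_fun_sub (by fun_prop) (by fun_prop), fderiv_fun_add hb' (by fun_prop),
    fderiv_fun_mul ha' (by fun_prop), fderiv_fun_pow 2 (by fun_prop)]
  simp only [sub_apply, add_apply,
    smul_apply, smul_eq_mul, nsmul_eq_mul, fderiv_comp_xy_apply ha,
    fderiv_comp_xy_apply hb, fderiv_third_apply]
  ring

theorem fderiv_Ffun_apply (ha : DifferentiableAt ℝ (pdx z) (x, y))
    (hb : DifferentiableAt ℝ (pdy z) (x, y)) (hD : Dfun z (x, y, p) ≠ 0) (v : ℝ × ℝ × ℝ) :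
    fderiv ℝ (Ffun z) (x, y, p) v = -fderiv ℝ (Dfun z) (x, y, p) v / Dfun z (x, y, p) ^ 2 := by
  change fderiv ℝ (fun q => (1 : ℝ) / Dfun z q) (x, y, p) v = _
  rw [fderiv_div_apply (differentiableAt_const 1) (differentiableAt_Dfun ha hb) hD]
  simp

theorem fderiv_Gfun_apply (ha : DifferentiableAt ℝ (pdx z) (x, y))
    (hb : DifferentiableAt ℝ (pdy z) (x, y)) (hD : Dfun z (x, y, p) ≠ 0) (v : ℝ × ℝ × ℝ) :
    fderiv ℝ (Gfun z) (x, y, p) v =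
      ((v.2.2 - (v.1 * pdx (pdx z) (x, y) + v.2.1 * pdy (pdx z) (x, y))) * Dfun z (x, y, p) -
        (p - pdx z (x, y)) * fderiv ℝ (Dfun z) (x, y, p) v) / Dfun z (x, y, p) ^ 2 := by
  have ha' := ha.comp_xy (p := p)
  change fderiv ℝ (fun q => (q.2.2 - pdx z (q.1, q.2.1)) / Dfun z q) (x, y, p) v = _
  rw [fderiv_div_apply (by fun_prop) (differentiableAt_Dfun ha hb) hD,
    fderiv_fun_sub (by fun_prop) ha']
  simp [fderiv_third_apply, fderiv_comp_xy_apply ha]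

theorem Efun_eq_neg_GT_div_sq (hz : ContDiffAt ℝ 2 z (x, y)) (hD : Dfun z (x, y, p) ≠ 0) :
    Efun z (x, y, p) = -GT z (x, y) / Dfun z (x, y, p) ^ 2 := by
  have ha := hz.differentiableAt_fderiv_apply (1, 0)
  have hb := hz.differentiableAt_fderiv_apply (0, 1)
  simp only [Efun, pd1, pd2, pd3, fderiv_Ffun_apply ha hb hD, fderiv_Gfun_apply ha hb hD,
    fderiv_Dfun_apply ha hb, pdy_pdx_eq_pdx_pdy hz]
  have hDval : Dfun z (x, y, p) = pdy z (x, y) + pdx z (x, y) * p - p ^ 2 := rfl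
  simp only [Ffun, Gfun, GT]
  field_simp
  rw [hDval]
  ring

end Compatibility

/-- `D(1) + D(-1) - 2 D(0) = -2`. -/
theorem exists_Dfun_ne_zero (z : ℝ × ℝ → ℝ) (x y : ℝ) : ∃ p, Dfun z (x, y, p) ≠ 0 := by
  by_contra! h
  have h₀ := h 0
  have h₁ := h 1
  have h₂ := h (-1)
  simp only [Dfun] at h₀ h₁ h₂
  linarith

/-- For `z` twice continuously differentiable near `(x₀,y₀)`, the
Gibbons–Tsarev equation at `(x₀,y₀)` is equivalent to vanishing of the compatibility
expression `E` at `(x₀,y₀,p)` for every (equivalently, some) `p` with `D(x₀,y₀,p) ≠ 0`. -/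
theorem statement1 (U : Set (ℝ × ℝ)) (hU : IsOpen U) (z : ℝ × ℝ → ℝ)
    (hz : ContDiffOn ℝ 2 z U) (x₀ y₀ : ℝ) (hmem : (x₀, y₀) ∈ U) :
    List.TFAE
      [GT z (x₀, y₀) = 0,
       ∀ p : ℝ, Dfun z (x₀, y₀, p) ≠ 0 → Efun z (x₀, y₀, p) = 0,
       ∃ p : ℝ, Dfun z (x₀, y₀, p) ≠ 0 ∧ Efun z (x₀, y₀, p) = 0] := by
  have hz₀ : ContDiffAt ℝ 2 z (x₀, y₀) := hz.contDiffAt (hU.mem_nhds hmem)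
  tfae_have 1 → 2 := by
    intro hGT p hD
    rw [Efun_eq_neg_GT_div_sq hz₀ hD, hGT, neg_zero, zero_div]
  tfae_have 2 → 3 := fun hE =>
    (exists_Dfun_ne_zero z x₀ y₀).imp fun p hD => ⟨hD, hE p hD⟩
  tfae_have 3 → 1 := by
    rintro ⟨p, hD, hE⟩
    rw [Efun_eq_neg_GT_div_sq hz₀ hD, div_eq_zero_iff, neg_eq_zero] at hE
    exact hE.resolve_right (pow_ne_zero 2 hD)
  tfae_finish
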